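/- arXiv:1107.5865 — 2 statements merged into one kernel-verified Lean document; each statement's English description precedes it below -/
import Mathlib

section
/- Let f, g : OnePoint ℝ → OnePoint (ℝ × ℝ) be the maps sending ∞ to ∞ and a real number x to (x, x) and to (0, x) respectively. Then f and g are continuous, and the map H : OnePoint ℝ × [0,1] → OnePoint (ℝ × ℝ) defined by H(x, t) = (t·x, x) for x ∈ ℝ and H(∞, t) = ∞ is continuous, so H is a homotopy from g to f. Moreover H is pointed and equivariant for negation: H(∞, t) = ∞ for all t ∈ [0,1], and H(−x, t) = −H(x, t) for all x ∈ OnePoint ℝ and t ∈ [0,1], where negation on OnePoint ℝ and on OnePoint (ℝ × ℝ) is the extension of v ↦ −v that fixes ∞. -/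
open OnePoint

/-- The diagonal inclusion `S^{1,1} → S^{2,2}`, `x ↦ (x, x)`, on one-point
compactifications. -/
noncomputable def diagMap : OnePoint ℝ → OnePoint (ℝ × ℝ) :=
  OnePoint.map fun x : ℝ => (x, x)

/-- The vertical-axis inclusion `S^{1,1} → S^{2,2}`, `x ↦ (0, x)`, on one-point
compactifications. -/
noncomputable def axisMap : OnePoint ℝ → OnePoint (ℝ × ℝ) :=
  OnePoint.map fun x : ℝ => ((0 : ℝ), x)

/-- The homotopy `H(x, t) = (t·x, x)`, `H(∞, t) = ∞`. -/
noncomputable def diagHomotopy : OnePoint ℝ × Set.Icc (0 : ℝ) 1 → OnePoint (ℝ × ℝ) :=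
  fun p => OnePoint.map (fun x : ℝ => ((p.2 : ℝ) * x, x)) p.1

/-- Negation on a one-point compactification, fixing `∞`. -/
noncomputable def onePointNeg {V : Type*} [Neg V] : OnePoint V → OnePoint V :=
  OnePoint.map fun v : V => -v

/-!
Since the second coordinate of `(t·x, x)` is `x`, the family `x ↦ (t·x, x)` is proper uniformly in
`t`, and a jointly continuous family that is proper uniformly in the parameter extends continuously
to the one-point compactifications. The two inclusions are the ends `t = 1` and `t = 0`, and each
`x ↦ (t·x, x)` is odd.
-/

open Filter Topology

theorem OnePoint.continuous_map_prod {X Y T : Type*} [TopologicalSpace X] [TopologicalSpace Y]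
    [TopologicalSpace T] {f : T → X → Y} (hf : Continuous fun p : X × T => f p.2 p.1)
    (hproper : Tendsto (fun p : X × T => f p.2 p.1) (coclosedCompact X ×ˢ ⊤)
      (coclosedCompact Y)) :
    Continuous fun p : OnePoint X × T => OnePoint.map (f p.2) p.1 := by
  rw [continuous_iff_continuousAt]
  rintro ⟨x, t⟩
  induction x using OnePoint.rec with
  | infty =>
    have hnhds : 𝓝 ((∞ : OnePoint X), t) ≤
        map (↑) (coclosedCompact X) ×ˢ ⊤ ⊔ pure ∞ ×ˢ ⊤ := by
      rw [← sup_prod, ← nhds_infty_eq, nhds_prod_eq]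
      exact prod_mono le_rfl le_top
    refine Tendsto.mono_left (Tendsto.sup ?_ ?_) hnhds
    · rw [← Filter.map_id (f := ⊤), prod_map_map_eq, tendsto_map'_iff]
      exact tendsto_coe_infty.comp hproper
    · rw [pure_prod, tendsto_map'_iff]
      exact tendsto_const_nhds
  | coe x =>
    have hnhds : map (Prod.map (↑) id) (𝓝 (x, t)) = 𝓝 ((x : OnePoint X), t) :=
      (isOpenEmbedding_coe.prodMap IsOpenEmbedding.id).map_nhds_eq _
    rw [ContinuousAt, ← hnhds, tendsto_map'_iff]
    exact (continuous_coe.comp hf).continuousAt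

theorem tendsto_prodMk_fst_cocompact {X T Y : Type*} [TopologicalSpace X] [TopologicalSpace Y]
    (g : X × T → Y) :
    Tendsto (fun p : X × T => (g p, p.1)) (cocompact X ×ˢ ⊤) (cocompact (Y × X)) := by
  rw [← coprod_cocompact]
  exact Tendsto.mono_right (tendsto_comap_iff.mpr tendsto_fst :
    Tendsto (fun p : X × T => (g p, p.1)) _ (comap Prod.snd _)) le_sup_right

theorem OnePoint.map_onePointNeg_of_odd {V W : Type*} [Neg V] [Neg W] {f : V → W}
    (hf : ∀ v, f (-v) = -f v) (x : OnePoint V) :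
    OnePoint.map f (onePointNeg x) = onePointNeg (OnePoint.map f x) := by
  induction x using OnePoint.rec with
  | infty => rfl
  | coe v => simp [onePointNeg, hf]

theorem continuous_diagHomotopy : Continuous diagHomotopy := by
  refine OnePoint.continuous_map_prod
    (f := fun (t : Set.Icc (0 : ℝ) 1) (x : ℝ) => ((t : ℝ) * x, x)) (by fun_prop) ?_
  simp only [coclosedCompact_eq_cocompact]
  exact tendsto_prodMk_fst_cocompact fun p : ℝ × Set.Icc (0 : ℝ) 1 => (p.2 : ℝ) * p.1

/-- The maps `f(x) = (x,x)` and `g(x) = (0,x)` from `S^{1,1}` to `S^{2,2}` are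
continuous, and `H(x,t) = (t·x, x)` is a continuous homotopy from `g` to `f`
which is pointed (`H(∞,t) = ∞`) and equivariant for negation
(`H(-x,t) = -H(x,t)`). -/
theorem diag_axis_equivariant_pointed_homotopy :
    Continuous diagMap ∧ Continuous axisMap ∧ Continuous diagHomotopy ∧
    (∀ t : Set.Icc (0 : ℝ) 1, diagHomotopy (∞, t) = ∞) ∧
    (∀ x : OnePoint ℝ, diagHomotopy (x, ⟨0, by norm_num⟩) = axisMap x) ∧
    (∀ x : OnePoint ℝ, diagHomotopy (x, ⟨1, by norm_num⟩) = diagMap x) ∧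
    (∀ (x : OnePoint ℝ) (t : Set.Icc (0 : ℝ) 1),
      diagHomotopy (onePointNeg x, t) = onePointNeg (diagHomotopy (x, t))) := by
  have h0 : ∀ x : OnePoint ℝ, diagHomotopy (x, ⟨0, by norm_num⟩) = axisMap x := fun x => by
    simp only [diagHomotopy, axisMap, zero_mul]
  have h1 : ∀ x : OnePoint ℝ, diagHomotopy (x, ⟨1, by norm_num⟩) = diagMap x := fun x => by
    simp only [diagHomotopy, diagMap, one_mul]
  have hneg : ∀ (x : OnePoint ℝ) (t : Set.Icc (0 : ℝ) 1),
      diagHomotopy (onePointNeg x, t) = onePointNeg (diagHomotopy (x, t)) := fun x t =>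
    OnePoint.map_onePointNeg_of_odd (fun y => by simp [mul_neg]) x
  have hslice : ∀ t, Continuous fun x => diagHomotopy (x, t) := fun t =>
    continuous_diagHomotopy.comp (continuous_id.prodMk continuous_const)
  refine ⟨?_, ?_, continuous_diagHomotopy, fun _ => rfl, h0, h1, hneg⟩
  · simpa only [h1] using hslice ⟨1, by norm_num⟩
  · simpa only [h0] using hslice ⟨0, by norm_num⟩
end

section
/- Regard ℍ = Quaternion ℝ as a four-dimensional real inner product space, let G = {f : ℍ ≃ₗᵢ[ℝ] ℍ | det(f) = 1} be the group of real-linear isometry equivalences of ℍ of determinant 1 (≅ SO(4)), and let K = {f ∈ G | f(1) = 1} (≅ SO(3), acting on the purely imaginary quaternions). Then the map h : G → S(ℍ) × K given by h(f) = (f(1), v ↦ (f(1))⁻¹ · f(v)) is a well-defined homeomorphism onto the product of the unit sphere of ℍ with K: f(1) is a unit quaternion, the map v ↦ (f(1))⁻¹ · f(v) is a linear isometry of determinant 1 fixing 1, and the inverse of h is the continuous map (u, g) ↦ (v ↦ u · g(v)). Moreover h is equivariant: letting c be the linear isometry v ↦ i · v · i⁻¹ of ℍ (which negates the j- and k-coordinates),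 for every f ∈ G one has h(c ∘ f ∘ c⁻¹) = (c(f(1)), c ∘ g ∘ c⁻¹), where g(v) = (f(1))⁻¹ · f(v). -/
open Quaternion

/-- Topologize the isometry group of `ℍ` by pointwise convergence (equivalently,
on this finite-dimensional space, the norm topology). -/
noncomputable instance : TopologicalSpace (Quaternion ℝ ≃ₗᵢ[ℝ] Quaternion ℝ) :=
  TopologicalSpace.induced
    (fun f => (f : Quaternion ℝ → Quaternion ℝ)) Pi.topologicalSpace

/-- The group `G ≅ SO(4)` of real-linear isometry equivalences of `ℍ` of
determinant `1`. -/
def G4 : Type :=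
  {f : Quaternion ℝ ≃ₗᵢ[ℝ] Quaternion ℝ //
    LinearMap.det ((f.toLinearEquiv : Quaternion ℝ ≃ₗ[ℝ] Quaternion ℝ) :
      Quaternion ℝ →ₗ[ℝ] Quaternion ℝ) = 1}

noncomputable instance : TopologicalSpace G4 := instTopologicalSpaceSubtype

/-- The subgroup `K ≅ SO(3)` of elements of `G` fixing `1 ∈ ℍ`. -/
def K4 : Type := {f : G4 // f.1 1 = 1}

noncomputable instance : TopologicalSpace K4 := instTopologicalSpaceSubtype

/-- The quaternion `i`. -/
def quatI : Quaternion ℝ := ⟨0, 1, 0, 0⟩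

/-!
Left multiplication by a unit quaternion `u` is an isometry of `ℍ` of determinant
`normSq u ^ 2 = 1`, so the unit sphere acts on `G` by `u • f = (v ↦ u · f(v))`, continuously.
Since `(u • f)(1) = u · f(1)`, the map `f ↦ f(1)` is a continuous `S(ℍ)`-equivariant map onto
the sphere whose fibre over `1` is `K`; hence `f ↦ (f(1), f(1)⁻¹ • f)` is a homeomorphism
`G ≃ S(ℍ) × K` with inverse `(u, g) ↦ u • g`. Conjugation by `i` is a multiplicative
isometry fixing `1`, which gives the equivariance.
-/

open Metric

theorem Quaternion.det_mulLeft {R : Type*} [CommRing R] (q : ℍ[R]) :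
    LinearMap.det (LinearMap.mulLeft R q) = normSq q ^ 2 := by
  let b : Module.Basis (Fin 4) R ℍ[R] := QuaternionAlgebra.basisOneIJK _ _ _
  have hrepr : ∀ x : ℍ[R], b.repr x = ![x.re, x.imI, x.imJ, x.imK] := fun _ => rfl
  have hb : ∀ j, b j = (Quaternion.equivTuple R).symm (Pi.single j 1) := fun j =>
    b.repr.injective <| by
      rw [Module.Basis.repr_self]; ext k; rw [hrepr]
      fin_cases j <;> fin_cases k <;> simp
  have hmatrix : LinearMap.toMatrix b b (LinearMap.mulLeft R q) =
      !![q.re, -q.imI, -q.imJ, -q.imK;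
         q.imI, q.re, -q.imK, q.imJ;
         q.imJ, q.imK, q.re, -q.imI;
         q.imK, -q.imJ, q.imI, q.re] := by
    ext i j
    rw [LinearMap.toMatrix_apply, hb, LinearMap.mulLeft_apply, hrepr]
    simp only [re_mul, imI_mul, imJ_mul, imK_mul]
    fin_cases i <;> fin_cases j <;> simp
  rw [← LinearMap.det_toMatrix b, hmatrix, normSq_def']
  simp [Matrix.det_succ_row_zero, Fin.sum_univ_succ, Fin.succAbove]
  ring

theorem conj_inv_mul {D : Type*} [DivisionRing D] {q : D} (hq : q ≠ 0) (a b : D) :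
    q * (a⁻¹ * b) * q⁻¹ = (q * a * q⁻¹)⁻¹ * (q * b * q⁻¹) := by
  simp [mul_inv_rev, mul_assoc, inv_mul_cancel_left₀ hq]

section SphereMulLeft

variable (𝕜 : Type*) {A : Type*} [NormedField 𝕜] [NormedDivisionRing A] [NormedAlgebra 𝕜 A]

noncomputable def sphereMulLeft (u : sphere (0 : A) 1) : A ≃ₗᵢ[𝕜] A where
  toLinearEquiv := (unitSphereToUnits A u).mulLeftLinearEquiv 𝕜 A
  norm_map' v := by simp [mem_sphere_zero_iff_norm.1 u.2]

end SphereMulLeft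

theorem det_sphereMulLeft (u : sphere (0 : ℍ[ℝ]) 1) :
    LinearMap.det ((sphereMulLeft ℝ u).toLinearEquiv : ℍ[ℝ] →ₗ[ℝ] ℍ[ℝ]) = 1 := by
  calc _ = normSq (u : ℍ[ℝ]) ^ 2 := Quaternion.det_mulLeft _
    _ = 1 := by rw [normSq_eq_norm_mul_self, mem_sphere_zero_iff_norm.1 u.2]; norm_num

theorem det_trans_sphereMulLeft (f : ℍ[ℝ] ≃ₗᵢ[ℝ] ℍ[ℝ]) (u : sphere (0 : ℍ[ℝ]) 1) :
    LinearMap.det ((f.trans (sphereMulLeft ℝ u)).toLinearEquiv : ℍ[ℝ] →ₗ[ℝ] ℍ[ℝ]) =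
      LinearMap.det (f.toLinearEquiv : ℍ[ℝ] →ₗ[ℝ] ℍ[ℝ]) := by
  change LinearMap.det (((sphereMulLeft ℝ u).toLinearEquiv : ℍ[ℝ] →ₗ[ℝ] ℍ[ℝ]) ∘ₗ
    (f.toLinearEquiv : ℍ[ℝ] →ₗ[ℝ] ℍ[ℝ])) = _
  rw [LinearMap.det_comp, det_sphereMulLeft, one_mul]

theorem continuous_isometryEquiv_apply (v : ℍ[ℝ]) :
    Continuous fun f : ℍ[ℝ] ≃ₗᵢ[ℝ] ℍ[ℝ] => f v :=
  (continuous_apply v).comp continuous_induced_dom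

theorem continuous_isometryEquiv_iff {X : Type*} [TopologicalSpace X] {g : X → ℍ[ℝ] ≃ₗᵢ[ℝ] ℍ[ℝ]} :
    Continuous g ↔ ∀ v, Continuous fun x => g x v := by
  rw [continuous_induced_rng, continuous_pi_iff]
  rfl

namespace G4

theorem continuous_val_apply (v : ℍ[ℝ]) : Continuous fun f : G4 => f.1 v :=
  (continuous_isometryEquiv_apply v).comp continuous_subtype_val

noncomputable instance : MulAction (sphere (0 : ℍ[ℝ]) 1) G4 where
  smul u f := ⟨f.1.trans (sphereMulLeft ℝ u), (det_trans_sphereMulLeft f.1 u).trans f.2⟩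
  one_smul f := Subtype.ext <| LinearIsometryEquiv.ext fun v => one_mul (f.1 v)
  mul_smul u w f := Subtype.ext <| LinearIsometryEquiv.ext fun v => mul_assoc (u : ℍ[ℝ]) w (f.1 v)

instance : ContinuousSMul (sphere (0 : ℍ[ℝ]) 1) G4 where
  continuous_smul := by
    refine Continuous.subtype_mk (continuous_isometryEquiv_iff.2 fun v => ?_) _
    exact (continuous_subtype_val.comp continuous_fst).mul
      ((continuous_val_apply v).comp continuous_snd)

theorem norm_apply_one (f : G4) : ‖f.1 1‖ = 1 := by
  rw [f.1.norm_map, norm_one]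

noncomputable def evalOne (f : G4) : sphere (0 : ℍ[ℝ]) 1 :=
  ⟨f.1 1, mem_sphere_zero_iff_norm.2 (norm_apply_one f)⟩

theorem continuous_evalOne : Continuous evalOne :=
  (continuous_val_apply 1).subtype_mk _

theorem evalOne_smul (u : sphere (0 : ℍ[ℝ]) 1) (f : G4) : (u • f).evalOne = u * f.evalOne := rfl

theorem evalOne_eq_one (k : K4) : k.1.evalOne = 1 := Subtype.ext k.2

theorem evalOne_inv_smul_mem_K4 (f : G4) : (f.evalOne⁻¹ • f).1 1 = 1 :=
  congrArg Subtype.val (inv_mul_cancel f.evalOne)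

noncomputable def homeomorphSphereProd : G4 ≃ₜ sphere (0 : ℍ[ℝ]) 1 × K4 where
  toFun f := (f.evalOne, ⟨f.evalOne⁻¹ • f, evalOne_inv_smul_mem_K4 f⟩)
  invFun p := p.1 • p.2.1
  left_inv f := smul_inv_smul f.evalOne f
  right_inv := fun ⟨u, k⟩ => by
    have hu : (u • k.1).evalOne = u := by rw [evalOne_smul, evalOne_eq_one, mul_one]
    ext1
    · exact hu
    · exact Subtype.ext (by simp only [hu, inv_smul_smul])
  continuous_toFun := continuous_evalOne.prodMk <|
    (continuous_smul.comp (continuous_evalOne.inv.prodMk continuous_id)).subtype_mk _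
  continuous_invFun :=
    continuous_smul.comp (continuous_fst.prodMk (continuous_subtype_val.comp continuous_snd))

theorem homeomorphSphereProd_conj {q : ℍ[ℝ]} (hq : q ≠ 0) (c : ℍ[ℝ] ≃ₗᵢ[ℝ] ℍ[ℝ])
    (hc : ∀ v, c v = q * v * q⁻¹) {f fc : G4} (hfc : ∀ v, fc.1 v = c (f.1 (c.symm v))) :
    ((homeomorphSphereProd fc).1 : ℍ[ℝ]) = c (f.1 1) ∧
      ∀ v, ((homeomorphSphereProd fc).2).1.1 v =
        c (((homeomorphSphereProd f).2).1.1 (c.symm v)) := by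
  have hc_one : c 1 = 1 := by rw [hc, mul_one, mul_inv_cancel₀ hq]
  have hfc_one : fc.1 1 = c (f.1 1) := by
    rw [hfc, c.symm_apply_eq.2 hc_one.symm]
  refine ⟨hfc_one, fun v => ?_⟩
  change (fc.1 1)⁻¹ * fc.1 v = c ((f.1 1)⁻¹ * f.1 (c.symm v))
  rw [hfc_one, hfc, hc, hc, hc, conj_inv_mul hq]

end G4

theorem quatI_ne_zero : quatI ≠ 0 := fun h => by
  simpa [quatI] using congrArg QuaternionAlgebra.imI h

/-- The equivariant homeomorphism `SO(4) ≅ S³ × SO(3)`: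
`h(f) = (f(1), v ↦ f(1)⁻¹ f(v))` is a homeomorphism from `G` onto
`S(ℍ) × K` with inverse `(u, g) ↦ (v ↦ u · g(v))`, and it is equivariant for
conjugation by the isometry `c : v ↦ i v i⁻¹`:
`h(c ∘ f ∘ c⁻¹) = (c(f(1)), c ∘ g ∘ c⁻¹)` where `g(v) = f(1)⁻¹ f(v)`. -/
theorem so4_homeo_sphere_times_so3_equivariant :
    ∃ e : G4 ≃ₜ Metric.sphere (0 : Quaternion ℝ) 1 × K4,
      (∀ f : G4, ‖f.1 1‖ = 1) ∧
      (∀ f : G4, ((e f).1 : Quaternion ℝ) = f.1 1) ∧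
      (∀ (f : G4) (v : Quaternion ℝ), ((e f).2).1.1 v = (f.1 1)⁻¹ * f.1 v) ∧
      (∀ (u : Metric.sphere (0 : Quaternion ℝ) 1) (k : K4) (v : Quaternion ℝ),
        (e.symm (u, k)).1 v = (u : Quaternion ℝ) * k.1.1 v) ∧
      (∀ c : Quaternion ℝ ≃ₗᵢ[ℝ] Quaternion ℝ,
        (∀ v : Quaternion ℝ, c v = quatI * v * quatI⁻¹) →
        ∀ f fc : G4, (∀ v : Quaternion ℝ, fc.1 v = c (f.1 (c.symm v))) →
          (((e fc).1 : Quaternion ℝ) = c (f.1 1)) ∧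
          (∀ v : Quaternion ℝ,
            ((e fc).2).1.1 v = c (((e f).2).1.1 (c.symm v)))) :=
  ⟨G4.homeomorphSphereProd, G4.norm_apply_one, fun _ => rfl, fun _ _ => rfl, fun _ _ _ => rfl,
    fun c hc _ _ hfc => G4.homeomorphSphereProd_conj quatI_ne_zero c hc hfc⟩
end
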